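/- Let L be a finitely generated R-module and let φ : A → B be a minimal free presentation of L over R (so A and B are finitely generated free R-modules, Coker φ ≅ L, and Im φ ⊆ 𝔪B, Ker φ ⊆ 𝔪A). Then the second syzygy Ω²_R(L) = Ker φ decomposes as Ker φ = (Ker φ ∩ 𝔭A) ⊕ (Ker φ ∩ 𝔮A); the summand M = Ker φ ∩ 𝔭A is annihilated by 𝔮 (hence is an S-module) and the summand N = Ker φ ∩ 𝔮A is annihilated by 𝔭 (hence is a T-module). -/

import Mathlib

noncomputable section

variable {k : Type} [Field k] {S T : Type} [CommRing S] [CommRing T]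

/-- The fiber product `R = S ×_k T = {(s,t) | π_S(s) = π_T(t)}`, as a subring of `S × T`. -/
def fiberProd (piS : S →+* k) (piT : T →+* k) : Subring (S × T) :=
  RingHom.eqLocus (piS.comp (RingHom.fst S T)) (piT.comp (RingHom.snd S T))

/-- The projection `σ : S ×_k T → S`. -/
def fpFst (piS : S →+* k) (piT : T →+* k) : ↥(fiberProd piS piT) →+* S :=
  (RingHom.fst S T).comp (fiberProd piS piT).subtype

/-- The projection `τ : S ×_k T → T`. -/
def fpSnd (piS : S →+* k) (piT : T →+* k) : ↥(fiberProd piS piT) →+* T :=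
  (RingHom.snd S T).comp (fiberProd piS piT).subtype

/-- The canonical surjection `S ×_k T → k`. -/
def fpRes (piS : S →+* k) (piT : T →+* k) : ↥(fiberProd piS piT) →+* k :=
  piS.comp (fpFst piS piT)

/-- The ideal `𝔭 = 𝔭 × 0` of `R = S ×_k T` (the kernel of the projection `τ : R → T`). -/
def pIdeal (piS : S →+* k) (piT : T →+* k) : Ideal ↥(fiberProd piS piT) :=
  RingHom.ker (fpSnd piS piT)

/-- The ideal `𝔮 = 0 × 𝔮` of `R = S ×_k T` (the kernel of the projection `σ : R → S`). -/
def qIdeal (piS : S →+* k) (piT : T →+* k) : Ideal ↥(fiberProd piS piT) :=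
  RingHom.ker (fpFst piS piT)

/-- The maximal ideal `𝔪 = 𝔭 ⊕ 𝔮` of `R = S ×_k T` (the kernel of `R → k`). -/
def mIdeal (piS : S →+* k) (piT : T →+* k) : Ideal ↥(fiberProd piS piT) :=
  RingHom.ker (fpRes piS piT)


/-!
Since `𝔪 = 𝔭 + 𝔮`, every `x ∈ Ker φ ⊆ 𝔪A` splits as `x = u + v` with `u ∈ 𝔭A` and `v ∈ 𝔮A`.
Then `φ u = -φ v` lies in `𝔭B ∩ 𝔮B`, which is `(𝔭 ∩ 𝔮)B = 0` because `B` is free, so `u` and `v`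
are themselves in `Ker φ`. Disjointness of the summands is `𝔭A ∩ 𝔮A = 0` for the free module `A`,
and the annihilation statements come from `𝔭𝔮 ⊆ 𝔭 ∩ 𝔮 = 0`.
-/

theorem Module.Basis.repr_mem_of_mem_smul_top {R M ι : Type*} [CommRing R] [AddCommGroup M]
    [Module R M] (b : Module.Basis ι R M) {I : Ideal R} {x : M}
    (hx : x ∈ I • (⊤ : Submodule R M)) (i : ι) : b.repr x i ∈ I := by
  refine Submodule.smul_induction_on hx (fun r hr n _ => ?_) (fun y z hy hz => ?_)
  · rw [map_smul, Finsupp.smul_apply, smul_eq_mul]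
    exact I.mul_mem_right _ hr
  · rw [map_add, Finsupp.add_apply]
    exact I.add_mem hy hz

theorem Module.Free.smul_top_inf_smul_top {R M : Type*} [CommRing R] [AddCommGroup M]
    [Module R M] [Module.Free R M] (I J : Ideal R) :
    (I • ⊤ : Submodule R M) ⊓ J • ⊤ = (I ⊓ J) • ⊤ := by
  refine le_antisymm ?_ (le_inf (Submodule.smul_mono_left inf_le_left)
    (Submodule.smul_mono_left inf_le_right))
  rintro x ⟨hI, hJ⟩
  let b := Module.Free.chooseBasis R M
  rw [← b.linearCombination_repr x, Finsupp.linearCombination_apply]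
  refine Submodule.finsuppSum_mem _ _ _ _ fun i _ => Submodule.smul_mem_smul ?_ Submodule.mem_top
  exact ⟨b.repr_mem_of_mem_smul_top hI i, b.repr_mem_of_mem_smul_top hJ i⟩

theorem Module.Free.smul_top_inf_smul_top_eq_bot {R M : Type*} [CommRing R] [AddCommGroup M]
    [Module R M] [Module.Free R M] {I J : Ideal R} (h : I ⊓ J = ⊥) :
    (I • ⊤ : Submodule R M) ⊓ J • ⊤ = ⊥ := by
  rw [Module.Free.smul_top_inf_smul_top, h, Submodule.bot_smul]

theorem Submodule.smul_eq_zero_of_mem_smul_top {R M : Type*} [CommRing R] [AddCommGroup M]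
    [Module R M] {I J : Ideal R} (h : I * J = ⊥) {a : R} (ha : a ∈ I)
    {x : M} (hx : x ∈ J • (⊤ : Submodule R M)) : a • x = 0 := by
  have hax : a • x ∈ (I * J) • (⊤ : Submodule R M) := by
    rw [Submodule.mul_smul]
    exact Submodule.smul_mem_smul ha hx
  rwa [h, Submodule.bot_smul, Submodule.mem_bot] at hax

theorem LinearMap.ker_inf_smul_top_sup_smul_top {R M N : Type*} [CommRing R] [AddCommGroup M]
    [Module R M] [AddCommGroup N] [Module R N] [Module.Free R N] {I J : Ideal R}
    (h : I ⊓ J = ⊥) (f : M →ₗ[R] N) :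
    LinearMap.ker f ⊓ (I • ⊤ ⊔ J • ⊤) = (LinearMap.ker f ⊓ I • ⊤) ⊔ (LinearMap.ker f ⊓ J • ⊤) := by
  refine le_antisymm ?_ (sup_le (inf_le_inf_left _ le_sup_left) (inf_le_inf_left _ le_sup_right))
  rintro x ⟨hx, hxIJ⟩
  obtain ⟨u, hu, v, hv, rfl⟩ := Submodule.mem_sup.mp hxIJ
  have hfu : f u ∈ (I • ⊤ : Submodule R N) := Submodule.smul_top_le_comap_smul_top I f hu
  have hfv : f v ∈ (J • ⊤ : Submodule R N) := Submodule.smul_top_le_comap_smul_top J f hv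
  have hsum : f u + f v = 0 := by rwa [← map_add]
  have hfu0 : f u = 0 := by
    have hmem : f u ∈ (I • ⊤ : Submodule R N) ⊓ J • ⊤ := by
      refine ⟨hfu, ?_⟩
      rw [eq_neg_of_add_eq_zero_left hsum]
      exact Submodule.neg_mem _ hfv
    rwa [Module.Free.smul_top_inf_smul_top_eq_bot h, Submodule.mem_bot] at hmem
  have hfv0 : f v = 0 := by rwa [hfu0, zero_add] at hsum
  exact Submodule.add_mem_sup ⟨hfu0, hu⟩ ⟨hfv0, hv⟩

theorem pIdeal_inf_qIdeal (piS : S →+* k) (piT : T →+* k) :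
    pIdeal piS piT ⊓ qIdeal piS piT = ⊥ := by
  rw [eq_bot_iff]
  rintro r ⟨hp, hq⟩
  have h1 : (r : S × T).1 = 0 := hq
  have h2 : (r : S × T).2 = 0 := hp
  ext
  · simpa using h1
  · simpa using h2

theorem mIdeal_le_pIdeal_sup_qIdeal (piS : S →+* k) (piT : T →+* k) :
    mIdeal piS piT ≤ pIdeal piS piT ⊔ qIdeal piS piT := by
  intro r hr
  have hr1 : piS (r : S × T).1 = 0 := hr
  have hr2 : piT (r : S × T).2 = 0 := r.property.symm.trans hr1
  refine Submodule.mem_sup.mpr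
    ⟨⟨((r : S × T).1, 0), ?_⟩, rfl, ⟨(0, (r : S × T).2), ?_⟩, rfl, ?_⟩
  · show piS (r : S × T).1 = piT 0
    rw [map_zero, hr1]
  · show piS 0 = piT (r : S × T).2
    rw [map_zero, hr2]
  · ext <;> simp

theorem syzygy_decomposition_fiberProd_general
    (piS : S →+* k) (piT : T →+* k)
    (A B : Type)
    [AddCommGroup A] [Module ↥(fiberProd piS piT) A]
    [Module.Free ↥(fiberProd piS piT) A]
    [AddCommGroup B] [Module ↥(fiberProd piS piT) B]
    [Module.Free ↥(fiberProd piS piT) B]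
    (φ : A →ₗ[↥(fiberProd piS piT)] B)
    (hmin₂ : LinearMap.ker φ ≤ mIdeal piS piT • (⊤ : Submodule ↥(fiberProd piS piT) A)) :
    LinearMap.ker φ =
        (LinearMap.ker φ ⊓ pIdeal piS piT • (⊤ : Submodule ↥(fiberProd piS piT) A)) ⊔
          (LinearMap.ker φ ⊓ qIdeal piS piT • (⊤ : Submodule ↥(fiberProd piS piT) A)) ∧
      Disjoint
        (LinearMap.ker φ ⊓ pIdeal piS piT • (⊤ : Submodule ↥(fiberProd piS piT) A))
        (LinearMap.ker φ ⊓ qIdeal piS piT • (⊤ : Submodule ↥(fiberProd piS piT) A)) ∧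
      (∀ q ∈ qIdeal piS piT,
        ∀ x ∈ LinearMap.ker φ ⊓ pIdeal piS piT • (⊤ : Submodule ↥(fiberProd piS piT) A),
          q • x = 0) ∧
      (∀ p ∈ pIdeal piS piT,
        ∀ y ∈ LinearMap.ker φ ⊓ qIdeal piS piT • (⊤ : Submodule ↥(fiberProd piS piT) A),
          p • y = 0) := by
  have hpq := pIdeal_inf_qIdeal piS piT
  have hqp : qIdeal piS piT * pIdeal piS piT = ⊥ :=
    le_bot_iff.mp (Ideal.mul_le_inf.trans (by rw [inf_comm, hpq]))
  have hker_le : LinearMap.ker φ ≤ pIdeal piS piT • ⊤ ⊔ qIdeal piS piT • ⊤ := by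
    rw [← Submodule.sup_smul]
    exact hmin₂.trans (Submodule.smul_mono_left (mIdeal_le_pIdeal_sup_qIdeal piS piT))
  refine ⟨?_, ?_, ?_, ?_⟩
  · rw [← LinearMap.ker_inf_smul_top_sup_smul_top hpq φ, inf_eq_left.mpr hker_le]
  · exact Disjoint.mono inf_le_right inf_le_right
      (disjoint_iff.mpr (Module.Free.smul_top_inf_smul_top_eq_bot hpq))
  · exact fun q hq x hx => Submodule.smul_eq_zero_of_mem_smul_top hqp hq hx.2
  · exact fun p hp y hy =>
      Submodule.smul_eq_zero_of_mem_smul_top (mul_comm (qIdeal piS piT) _ ▸ hqp) hp hy.2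

/-- **Proposition (Dress–Krämer; Prop. 4 in Moore, "Cohomology over fiber products of local
rings")**.  Let `R = S ×_k T` and let `φ : A → B` be a minimal free presentation of a
finitely generated `R`-module `L` (so `A, B` are finitely generated free `R`-modules,
`Coker φ ≅ L`, `Im φ ⊆ 𝔪B` and `Ker φ ⊆ 𝔪A`).  Then the second syzygy
`Ω²_R(L) = Ker φ` decomposes as `Ker φ = (Ker φ ∩ 𝔭A) ⊕ (Ker φ ∩ 𝔮A)`, where
`M = Ker φ ∩ 𝔭A` is annihilated by `𝔮` (hence is an `S`-module) and `N = Ker φ ∩ 𝔮A` is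
annihilated by `𝔭` (hence is a `T`-module). -/
theorem syzygy_decomposition_fiberProd
    (piS : S →+* k) (piT : T →+* k)
    [IsNoetherianRing S] [IsNoetherianRing T] [IsLocalRing S] [IsLocalRing T]
    (hSsurj : Function.Surjective piS) (hTsurj : Function.Surjective piT)
    (hSker : RingHom.ker piS = IsLocalRing.maximalIdeal S)
    (hTker : RingHom.ker piT = IsLocalRing.maximalIdeal T)
    (L A B : Type) [AddCommGroup L] [Module ↥(fiberProd piS piT) L]
    [Module.Finite ↥(fiberProd piS piT) L]
    [AddCommGroup A] [Module ↥(fiberProd piS piT) A]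
    [Module.Free ↥(fiberProd piS piT) A] [Module.Finite ↥(fiberProd piS piT) A]
    [AddCommGroup B] [Module ↥(fiberProd piS piT) B]
    [Module.Free ↥(fiberProd piS piT) B] [Module.Finite ↥(fiberProd piS piT) B]
    (φ : A →ₗ[↥(fiberProd piS piT)] B)
    (coker : (B ⧸ LinearMap.range φ) ≃ₗ[↥(fiberProd piS piT)] L)
    (hmin₁ : LinearMap.range φ ≤ mIdeal piS piT • (⊤ : Submodule ↥(fiberProd piS piT) B))
    (hmin₂ : LinearMap.ker φ ≤ mIdeal piS piT • (⊤ : Submodule ↥(fiberProd piS piT) A)) :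
    LinearMap.ker φ =
        (LinearMap.ker φ ⊓ pIdeal piS piT • (⊤ : Submodule ↥(fiberProd piS piT) A)) ⊔
          (LinearMap.ker φ ⊓ qIdeal piS piT • (⊤ : Submodule ↥(fiberProd piS piT) A)) ∧
      Disjoint
        (LinearMap.ker φ ⊓ pIdeal piS piT • (⊤ : Submodule ↥(fiberProd piS piT) A))
        (LinearMap.ker φ ⊓ qIdeal piS piT • (⊤ : Submodule ↥(fiberProd piS piT) A)) ∧
      (∀ q ∈ qIdeal piS piT,
        ∀ x ∈ LinearMap.ker φ ⊓ pIdeal piS piT • (⊤ : Submodule ↥(fiberProd piS piT) A),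
          q • x = 0) ∧
      (∀ p ∈ pIdeal piS piT,
        ∀ y ∈ LinearMap.ker φ ⊓ qIdeal piS piT • (⊤ : Submodule ↥(fiberProd piS piT) A),
          p • y = 0) :=
  syzygy_decomposition_fiberProd_general piS piT A B φ hmin₂
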